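/- ECP is topologically Weihrauch equivalent to overt choice for ℚ. That is: (1) there exist continuous K and H such that K maps every p enumerating a nonempty tree T ⊆ List Bool with eventually constant paths everywhere to a name of some nonempty closed set A ⊆ ℚ, and H maps (p, q), for any name q of any point of A, to an eventually constant path of T; and (2) there exist continuous K' and H' such that K' maps every name p of a nonempty closed set A ⊆ ℚ to an enumeration of some nonempty tree T ⊆ List Bool with eventually constant paths everywhere, and H' maps (p, x), for x any eventually constant path of T, to a name of some point of A. -/

import Mathlib

/-- `p` enumerates `S` if `S = {n | ∃ k, p k = n + 1}`. -/
def Enumerates (p : ℕ → ℕ) (S : Set ℕ) : Prop := S = {n | ∃ k, p k = n + 1}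

/-- A name of a point `x` is an enumeration of `{n | x ∈ B n}`. -/
def PointName {X : Type*} (B : ℕ → Set X) (x : X) (p : ℕ → ℕ) : Prop :=
  Enumerates p {n | x ∈ B n}

/-- A name of a closed set `A` is an enumeration of `{n | B n ∩ A ≠ ∅}`. -/
def ClosedName {X : Type*} (B : ℕ → Set X) (A : Set X) (p : ℕ → ℕ) : Prop :=
  Enumerates p {n | (B n ∩ A).Nonempty}

/-- The basis of ℚ given by an enumeration `e` of pairs of rationals: the `n`-th basic
open set is the rational open interval with endpoints `e n` (i.e. `Iₙ ∩ ℚ`). -/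
def ratBasis (e : ℕ → ℚ × ℚ) (n : ℕ) : Set ℚ := Set.Ioo (e n).1 (e n).2

/-- `p` enumerates the tree `T ⊆ List Bool` (via the injective encoding `code`) if
`T = {w | ∃ k, p k = code w + 1}`. -/
def EnumeratesTree (code : List Bool → ℕ) (p : ℕ → ℕ) (T : Set (List Bool)) : Prop :=
  T = {w | ∃ k, p k = code w + 1}

/-- `T` is a nonempty tree that has eventually constant paths everywhere. -/
def ECPTree (T : Set (List Bool)) : Prop :=
  T.Nonempty ∧ (∀ w ∈ T, ∀ u, u <+: w → u ∈ T) ∧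
    ∀ w ∈ T, ∃ u ∈ T, w <+: u ∧ ∃ b : Bool, ∀ n : ℕ, u ++ List.replicate n b ∈ T

/-- `x` is an eventually constant path of `T`. -/
def ECPath (T : Set (List Bool)) (x : ℕ → Bool) : Prop :=
  (∀ n : ℕ, (List.ofFn fun i : Fin n => x i) ∈ T) ∧ ∃ N : ℕ, ∃ b : Bool, ∀ k, N ≤ k → x k = b

/-!
Everything rests on a coding of ℚ by eventually constant binary sequences. Every binary word `w`
gets an open set `V w ⊆ ℝ` and two distinct rational targets in it. The children of `w` cut
`V w` at an irrational point between the targets; each child keeps one target and receives as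
second target the rational of least code on a prescribed side of the kept one, the side
alternating with the depth. Along a constant branch `w bbb…` the cuts therefore close in on the
kept target from both sides, so the branch converges to that rational, its pin. Conversely, a
rational avoids all cuts, so it has exactly one branch, and that branch is eventually constant:
the rational of least code in its nodes eventually becomes a target and is then followed forever.

A closed `A ⊆ ℚ` thus gives the tree `{w | V w ∩ A ≠ ∅}`, and a tree `T` gives the closed set of
rationals whose branch is a path of `T`. Names are translated by searches in which every output
entry depends on finitely many input entries, which gives continuity.
-/

open Set Topology

noncomputable section

open scoped Classical

theorem Enumerates.mem_iff {p : ℕ → ℕ} {S : Set ℕ} (h : Enumerates p S) {n : ℕ} :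
    n ∈ S ↔ ∃ k, p k = n + 1 := by
  rw [h]
  rfl

theorem Antitone.exists_eventually_isMinOn {α : Type*} {f : α → ℕ} (hf : Function.Injective f)
    {S : ℕ → Set α} (hS : Antitone S) {r : α} (hr : ∀ n, r ∈ S n) :
    ∃ N a, ∀ n, N ≤ n → a ∈ S n ∧ IsMinOn f (S n) a := by
  let a n := Function.argminOn f (S n) ⟨r, hr n⟩
  have ha_mem n : a n ∈ S n := Function.argminOn_mem f _ _
  have ha_le {n x} (hx : x ∈ S n) : f (a n) ≤ f x := Function.argminOn_le f _ hx
  have hmono : Monotone (f ∘ a) := fun m n hmn => ha_le (hS hmn (ha_mem n))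
  have hbdd : BddAbove (range (f ∘ a)) := ⟨f r, by rintro _ ⟨n, rfl⟩; exact ha_le (hr n)⟩
  obtain ⟨N, hN⟩ := Nat.sSup_mem (range_nonempty _) hbdd
  refine ⟨N, a N, fun n hn => ?_⟩
  have hfa : f (a n) = f (a N) :=
    le_antisymm ((le_csSup hbdd ⟨n, rfl⟩).trans_eq hN.symm) (hmono hn)
  rw [← hf hfa]
  exact ⟨ha_mem n, fun x hx => ha_le hx⟩

theorem continuousOn_nat_find {X : Type*} [TopologicalSpace X] {P : X → ℕ → Prop}
    (hP : ∀ t, IsClopen {x | P x t}) :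
    ContinuousOn (fun x => if h : ∃ t, P x t then Nat.find h else 0) {x | ∃ t, P x t} := by
  intro x hx
  set t₀ := Nat.find hx with ht₀
  have hx₀ : P x t₀ ∧ ∀ t < t₀, ¬ P x t := (Nat.find_eq_iff hx).1 ht₀.symm
  let U := {y | P y t₀} ∩ ⋂ t ∈ Finset.range t₀, {y | ¬ P y t}
  have hU : IsOpen U :=
    (hP t₀).isOpen.inter (isOpen_biInter_finset fun t _ => (hP t).compl.isOpen)
  have hxU : x ∈ U := ⟨hx₀.1, by simpa using hx₀.2⟩
  refine (Filter.EventuallyEq.continuousAt (y := t₀) ?_).continuousWithinAt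
  filter_upwards [hU.mem_nhds hxU] with y ⟨hy, hlt⟩
  simp only [Finset.mem_range, mem_iInter, mem_ofPred_eq] at hlt
  rw [dif_pos ⟨_, hy⟩, Nat.find_eq_iff]
  exact ⟨hy, hlt⟩

theorem IsOpen.exists_rat_Ioo_subset {U : Set ℝ} (hU : IsOpen U) {a : ℝ} (ha : a ∈ U) :
    ∃ u v : ℚ, (u : ℝ) < a ∧ a < v ∧ Ioo (u : ℝ) v ⊆ U := by
  obtain ⟨ε, hε, hball⟩ := Metric.isOpen_iff.1 hU a ha
  obtain ⟨u, hu₁, hu₂⟩ := exists_rat_btwn (sub_lt_self a hε)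
  obtain ⟨v, hv₁, hv₂⟩ := exists_rat_btwn (lt_add_of_pos_right a hε)
  refine ⟨u, v, hu₂, hv₁, fun x hx => hball ?_⟩
  rw [Metric.mem_ball, Real.dist_eq, abs_lt]
  constructor <;> linarith [hx.1, hx.2]

theorem IsOpen.exists_rat_lt_mem {U : Set ℝ} (hU : IsOpen U) {a : ℝ} (ha : a ∈ U) :
    ∃ q : ℚ, (q : ℝ) < a ∧ (q : ℝ) ∈ U := by
  obtain ⟨u, v, hu, hv, hsub⟩ := hU.exists_rat_Ioo_subset ha
  obtain ⟨q, hq₁, hq₂⟩ := exists_rat_btwn hu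
  exact ⟨q, hq₂, hsub ⟨hq₁, hq₂.trans hv⟩⟩

theorem IsOpen.exists_rat_gt_mem {U : Set ℝ} (hU : IsOpen U) {a : ℝ} (ha : a ∈ U) :
    ∃ q : ℚ, a < (q : ℝ) ∧ (q : ℝ) ∈ U := by
  obtain ⟨u, v, hu, hv, hsub⟩ := hU.exists_rat_Ioo_subset ha
  obtain ⟨q, hq₁, hq₂⟩ := exists_rat_btwn hv
  exact ⟨q, hq₁, hsub ⟨hu.trans hq₁, hq₂⟩⟩

namespace ECP

def sideOf (s p : ℝ) : Set ℝ := if p < s then Iio s else Ioi s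

theorem sideOf_of_lt {s p : ℝ} (h : p < s) : sideOf s p = Iio s := if_pos h

theorem sideOf_of_gt {s p : ℝ} (h : s < p) : sideOf s p = Ioi s := if_neg h.not_gt

theorem isOpen_sideOf (s p : ℝ) : IsOpen (sideOf s p) := by
  unfold sideOf; split_ifs
  exacts [isOpen_Iio, isOpen_Ioi]

theorem mem_sideOf_self {s p : ℝ} (h : p ≠ s) : p ∈ sideOf s p := by
  rcases h.lt_or_gt with h | h
  · rw [sideOf_of_lt h]; exact h
  · rw [sideOf_of_gt h]; exact h

theorem sideOf_inter_sideOf_subset_ball {s s' p ε : ℝ} (h : s < p ∧ p < s' ∨ s' < p ∧ p < s)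
    (hs : |s - p| < ε) (hs' : |s' - p| < ε) : sideOf s p ∩ sideOf s' p ⊆ Metric.ball p ε := by
  rintro x ⟨hx, hx'⟩
  rw [Metric.mem_ball, Real.dist_eq, abs_lt]
  rw [abs_lt] at hs hs'
  rcases h with ⟨h, h'⟩ | ⟨h, h'⟩
  · rw [sideOf_of_gt h, mem_Ioi] at hx
    rw [sideOf_of_lt h', mem_Iio] at hx'
    constructor <;> linarith
  · rw [sideOf_of_lt h', mem_Iio] at hx
    rw [sideOf_of_gt h, mem_Ioi] at hx'
    constructor <;> linarith

/-- A node of the coding tree: the constant branch continuing with `b` converges to `target b`,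
and `near` is the last bit of the word, whose target the cut of the node hugs. -/
structure Node where
  V : Set ℝ
  target : Bool → ℚ
  near : Bool
  depth : ℕ

namespace Node

variable (d : Node) (b : Bool)

def gap : ℚ := min ((1 / 2) ^ d.depth) |d.target (!d.near) - d.target d.near|

def split : ℝ :=
  d.target d.near + (if d.target d.near < d.target (!d.near) then d.gap else -d.gap) / √2

def childV : Set ℝ := d.V ∩ sideOf d.split (d.target b)

def OnFreshSide (x : ℚ) : Prop :=
  if Even (d.depth + 1) then x < d.target b else d.target b < x

def freshCandidates : Set ℚ := {x | (x : ℝ) ∈ d.childV b ∧ d.OnFreshSide b x}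

def fresh : ℚ :=
  if h : (d.freshCandidates b).Nonempty then Function.argminOn Encodable.encode _ h else 0

def step : Node where
  V := d.childV b
  target c := if c = b then d.target b else d.fresh b
  near := b
  depth := d.depth + 1

def root : Node := ⟨univ, fun b => b.toNat, false, 0⟩

@[simp] theorem step_V : (d.step b).V = d.childV b := rfl
@[simp] theorem step_target_self : (d.step b).target b = d.target b := if_pos rfl
@[simp] theorem step_target_not : (d.step b).target (!b) = d.fresh b := by simp [step]
@[simp] theorem step_near : (d.step b).near = b := rfl
@[simp] theorem step_depth : (d.step b).depth = d.depth + 1 := rfl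

theorem childV_subset : d.childV b ⊆ d.V := inter_subset_left

structure Valid : Prop where
  isOpen : IsOpen d.V
  target_mem : ∀ b, (d.target b : ℝ) ∈ d.V
  target_ne : d.target false ≠ d.target true

variable {d}

theorem Valid.target_not_ne (hd : d.Valid) (b : Bool) : d.target (!b) ≠ d.target b := by
  cases b
  exacts [hd.target_ne.symm, hd.target_ne]

theorem Valid.gap_pos (hd : d.Valid) : 0 < d.gap :=
  lt_min (by positivity) (abs_pos.2 (sub_ne_zero.2 (hd.target_not_ne _)))

theorem Valid.split_irrational (hd : d.Valid) : Irrational d.split := by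
  have hgap : (if d.target d.near < d.target (!d.near) then d.gap else -d.gap) ≠ 0 := by
    split_ifs <;> simp [hd.gap_pos.ne']
  rw [split, div_eq_mul_inv]
  exact_mod_cast (irrational_sqrt_two.inv.ratCast_mul hgap).ratCast_add _

theorem Valid.split_ne (hd : d.Valid) (q : ℚ) : (q : ℝ) ≠ d.split :=
  (hd.split_irrational.ne_rat q).symm

theorem Valid.gap_div_sqrt_two_lt (hd : d.Valid) : (d.gap : ℝ) / √2 < d.gap :=
  div_lt_self (by exact_mod_cast hd.gap_pos) Real.one_lt_sqrt_two

theorem Valid.abs_split_sub_target_near (hd : d.Valid) :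
    |d.split - d.target d.near| < (1 / 2 : ℝ) ^ d.depth := by
  have hgap : (d.gap : ℝ) ≤ (1 / 2) ^ d.depth := by
    have : d.gap ≤ (1 / 2) ^ d.depth := min_le_left _ _
    simpa using (Rat.cast_le (K := ℝ)).2 this
  have hpos : (0 : ℝ) < d.gap := by exact_mod_cast hd.gap_pos
  have : |d.split - d.target d.near| = d.gap / √2 := by
    rw [split, add_sub_cancel_left]
    split_ifs
    · exact abs_of_pos (by positivity)
    · rw [Rat.cast_neg, neg_div, abs_neg, abs_of_pos (by positivity)]
  linarith [hd.gap_div_sqrt_two_lt]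

theorem Valid.split_between (hd : d.Valid) :
    (d.target d.near < d.split ∧ d.split < d.target (!d.near)) ∨
      (d.target (!d.near) < d.split ∧ d.split < d.target d.near) := by
  have hgap : (d.gap : ℝ) ≤ |(d.target (!d.near) : ℝ) - d.target d.near| := by
    have : d.gap ≤ |d.target (!d.near) - d.target d.near| := min_le_right _ _
    exact_mod_cast this
  have hpos : (0 : ℝ) < d.gap / √2 := div_pos (by exact_mod_cast hd.gap_pos) (by positivity)
  have hlt := hd.gap_div_sqrt_two_lt
  rw [split]
  split_ifs with h
  · have h' : (d.target d.near : ℝ) < d.target (!d.near) := by exact_mod_cast h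
    rw [abs_of_pos (sub_pos.2 h')] at hgap
    left; constructor <;> linarith
  · have h' : (d.target (!d.near) : ℝ) < d.target d.near := by
      exact_mod_cast (not_lt.1 h).lt_of_ne (hd.target_not_ne _)
    rw [abs_of_neg (sub_neg.2 h')] at hgap
    rw [Rat.cast_neg, neg_div]
    right; constructor <;> linarith

theorem Valid.split_between_target (hd : d.Valid) (b : Bool) :
    (d.target b < d.split ∧ d.split < d.target (!b)) ∨
      (d.target (!b) < d.split ∧ d.split < d.target b) := by
  rcases Bool.eq_or_eq_not b d.near with rfl | rfl
  · exact hd.split_between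
  · rw [Bool.not_not]
    exact hd.split_between.symm

theorem Valid.isOpen_childV (hd : d.Valid) (b : Bool) : IsOpen (d.childV b) :=
  hd.isOpen.inter (isOpen_sideOf _ _)

theorem Valid.target_mem_childV (hd : d.Valid) (b : Bool) : (d.target b : ℝ) ∈ d.childV b :=
  ⟨hd.target_mem b, mem_sideOf_self (hd.split_ne _)⟩

theorem Valid.disjoint_childV (hd : d.Valid) (b : Bool) :
    Disjoint (d.childV b) (d.childV (!b)) := by
  refine Disjoint.mono inter_subset_right inter_subset_right ?_
  rcases hd.split_between_target b with ⟨h, h'⟩ | ⟨h, h'⟩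
  · rw [sideOf_of_lt h, sideOf_of_gt h']
    exact Iio_disjoint_Ioi_of_le le_rfl
  · rw [sideOf_of_gt h', sideOf_of_lt h]
    exact (Iio_disjoint_Ioi_of_le le_rfl).symm

theorem Valid.eq_of_target_mem_childV (hd : d.Valid) {b c : Bool}
    (h : (d.target b : ℝ) ∈ d.childV c) : c = b := by
  by_contra hcb
  obtain rfl : c = !b := by cases b <;> cases c <;> simp_all
  exact (hd.disjoint_childV b).notMem_of_mem_left (hd.target_mem_childV b) h

theorem Valid.exists_mem_childV (hd : d.Valid) {q : ℚ} (hq : (q : ℝ) ∈ d.V) :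
    ∃ b, (q : ℝ) ∈ d.childV b := by
  rcases hd.split_between_target false with ⟨h, h'⟩ | ⟨h, h'⟩ <;>
    rcases (hd.split_ne q).lt_or_gt with hq' | hq'
  · exact ⟨false, hq, by rwa [sideOf_of_lt h]⟩
  · exact ⟨true, hq, by rwa [← Bool.not_false, sideOf_of_gt h']⟩
  · exact ⟨true, hq, by rwa [← Bool.not_false, sideOf_of_lt h]⟩
  · exact ⟨false, hq, by rwa [sideOf_of_gt h']⟩

theorem Valid.freshCandidates_nonempty (hd : d.Valid) (b : Bool) :
    (d.freshCandidates b).Nonempty := by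
  by_cases heven : Even (d.depth + 1)
  · obtain ⟨q, hlt, hq⟩ := (hd.isOpen_childV b).exists_rat_lt_mem (hd.target_mem_childV b)
    exact ⟨q, hq, by simpa [OnFreshSide, heven] using hlt⟩
  · obtain ⟨q, hlt, hq⟩ := (hd.isOpen_childV b).exists_rat_gt_mem (hd.target_mem_childV b)
    exact ⟨q, hq, by simpa [OnFreshSide, heven] using hlt⟩

theorem Valid.fresh_mem (hd : d.Valid) (b : Bool) : d.fresh b ∈ d.freshCandidates b := by
  rw [fresh, dif_pos (hd.freshCandidates_nonempty b)]
  exact Function.argminOn_mem _ _ _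

theorem encode_fresh_le {b : Bool} {q : ℚ} (hq : q ∈ d.freshCandidates b) :
    Encodable.encode (d.fresh b) ≤ Encodable.encode q := by
  rw [fresh, dif_pos ⟨q, hq⟩]
  exact Function.argminOn_le _ _ hq

theorem Valid.fresh_lt_iff (hd : d.Valid) (b : Bool) :
    d.fresh b < d.target b ↔ Even (d.depth + 1) := by
  have h := (hd.fresh_mem b).2
  unfold OnFreshSide at h
  split_ifs at h with heven
  · exact iff_of_true h heven
  · exact iff_of_false h.not_gt heven

theorem Valid.fresh_ne (hd : d.Valid) (b : Bool) : d.fresh b ≠ d.target b := by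
  have h := (hd.fresh_mem b).2
  unfold OnFreshSide at h
  split_ifs at h
  exacts [h.ne, h.ne']

theorem Valid.step (hd : d.Valid) (b : Bool) : (d.step b).Valid where
  isOpen := hd.isOpen_childV b
  target_mem c := by
    rcases Bool.eq_or_eq_not c b with rfl | rfl
    · exact (d.step_target_self c).symm ▸ hd.target_mem_childV c
    · exact (d.step_target_not b).symm ▸ (hd.fresh_mem b).1
  target_ne := by
    cases b
    · simpa [Node.step] using (hd.fresh_ne false).symm
    · simpa [Node.step] using hd.fresh_ne true

theorem root_valid : root.Valid where
  isOpen := isOpen_univ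
  target_mem _ := mem_univ _
  target_ne := by simp [root]

theorem Valid.eq_fresh {b : Bool} {q : ℚ} (hd : d.Valid) (hq : q ∈ d.freshCandidates b)
    (hmin : ∀ x : ℚ, (x : ℝ) ∈ d.childV b → Encodable.encode q ≤ Encodable.encode x) :
    d.fresh b = q :=
  Encodable.encode_injective <| (encode_fresh_le hq).antisymm (hmin _ (hd.fresh_mem b).1)

/-- A rational can avoid the fresh side of the surviving target at most once in a row: if the
branch keeps the old target the side flips with the parity, and if it switches to the fresh
target, that target lies beyond the old one on the fresh side. -/
theorem Valid.onFreshSide_step {b : Bool} {q : ℚ} (hd : d.Valid) (hq : q ≠ d.target b)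
    (hside : ¬ d.OnFreshSide b q) (c : Bool) (hq' : q ≠ (d.step b).target c) :
    (d.step b).OnFreshSide c q := by
  have hfresh := (hd.fresh_mem b).2
  rcases Bool.eq_or_eq_not c b with rfl | rfl
  all_goals
    simp only [OnFreshSide, step_depth, step_target_self, step_target_not,
      Nat.even_add_one] at hside hfresh hq' ⊢
    split_ifs at hside hfresh ⊢ <;> grind

end Node

open Node

def prefixOf (y : ℕ → Bool) (n : ℕ) : List Bool := List.ofFn fun i : Fin n => y i

theorem prefixOf_succ (y : ℕ → Bool) (n : ℕ) : prefixOf y (n + 1) = prefixOf y n ++ [y n] := by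
  rw [prefixOf, List.ofFn_succ', List.concat_eq_append]
  rfl

@[simp] theorem length_prefixOf (y : ℕ → Bool) (n : ℕ) : (prefixOf y n).length = n :=
  List.length_ofFn

theorem prefixOf_isPrefix (y : ℕ → Bool) {m n : ℕ} (h : m ≤ n) :
    prefixOf y m <+: prefixOf y n := by
  induction n, h using Nat.le_induction with
  | base => exact List.prefix_refl _
  | succ n _ ih => exact ih.trans ⟨[y n], (prefixOf_succ y n).symm⟩

theorem prefixOf_add_of_eventually_eq {y : ℕ → Bool} {N M : ℕ} {b : Bool}
    (hy : ∀ k, N ≤ k → y k = b) (hM : N ≤ M) (n : ℕ) :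
    prefixOf y (M + n) = prefixOf y M ++ List.replicate n b := by
  induction n with
  | zero => simp
  | succ n ih =>
    rw [← add_assoc, prefixOf_succ, ih, hy _ (by omega), List.replicate_succ',
      List.append_assoc]

def node (w : List Bool) : Node := w.foldl Node.step Node.root

theorem node_append_singleton (w : List Bool) (b : Bool) :
    node (w ++ [b]) = (node w).step b := by
  rw [node, List.foldl_append]
  rfl

theorem valid_node (w : List Bool) : (node w).Valid := by
  induction w using List.reverseRecOn with
  | nil => exact root_valid
  | append_singleton w b ih => rw [node_append_singleton]; exact ih.step b

@[simp] theorem depth_node (w : List Bool) : (node w).depth = w.length := by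
  induction w using List.reverseRecOn with
  | nil => rfl
  | append_singleton w b ih => simp [node_append_singleton, ih]

theorem node_V_antitone {w w' : List Bool} (h : w <+: w') : (node w').V ⊆ (node w).V := by
  obtain ⟨u, rfl⟩ := h
  induction u using List.reverseRecOn with
  | nil => simp
  | append_singleton u b ih =>
    rw [← List.append_assoc, node_append_singleton]
    exact (childV_subset _ _).trans ih

theorem eq_of_mem_node_V {w w' : List Bool} (hlen : w.length = w'.length) {x : ℝ}
    (hx : x ∈ (node w).V) (hx' : x ∈ (node w').V) : w = w' := by
  induction w using List.reverseRecOn generalizing w' with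
  | nil => exact (List.eq_nil_of_length_eq_zero hlen.symm).symm
  | append_singleton w b ih =>
    obtain ⟨w', b', rfl⟩ : ∃ w'' b', w' = w'' ++ [b'] := by
      rcases List.eq_nil_or_concat w' with rfl | ⟨w'', b', rfl⟩
      · simp at hlen
      · exact ⟨w'', b', List.concat_eq_append⟩
    rw [node_append_singleton] at hx hx'
    obtain rfl : w = w' :=
      ih (by simpa using hlen) (childV_subset _ _ hx) (childV_subset _ _ hx')
    by_contra hbb
    obtain rfl : b' = !b := by cases b <;> cases b' <;> simp_all
    exact (valid_node w).disjoint_childV b |>.notMem_of_mem_left hx hx'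

def pin (w : List Bool) (b : Bool) : ℚ := (node w).target b

theorem node_append_replicate_succ (w : List Bool) (b : Bool) (n : ℕ) :
    node (w ++ List.replicate (n + 1) b) = (node (w ++ List.replicate n b)).step b := by
  rw [List.replicate_succ', ← List.append_assoc, node_append_singleton]

theorem target_node_append_replicate (w : List Bool) (b : Bool) (n : ℕ) :
    (node (w ++ List.replicate n b)).target b = pin w b := by
  induction n with
  | zero => simp [pin]
  | succ n ih => rw [node_append_replicate_succ, step_target_self, ih]

theorem pin_mem_node_append_replicate (w : List Bool) (b : Bool) (n : ℕ) :
    (pin w b : ℝ) ∈ (node (w ++ List.replicate n b)).V :=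
  target_node_append_replicate w b n ▸ (valid_node _).target_mem b

theorem pin_mem_node (w : List Bool) (b : Bool) : (pin w b : ℝ) ∈ (node w).V := by
  simpa using pin_mem_node_append_replicate w b 0

/-- The second target of each node of the chain `w bᵏ`, and with it the cut, lies on the side of
the pin dictated by the parity of the depth. -/
theorem split_lt_pin_iff (w : List Bool) (b : Bool) (k : ℕ) :
    (node (w ++ List.replicate (k + 1) b)).split < pin w b ↔ Even (w.length + k + 1) := by
  have hd := valid_node (w ++ List.replicate (k + 1) b)
  have hbtw := hd.split_between
  have hfresh := (valid_node (w ++ List.replicate k b)).fresh_lt_iff b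
  rw [node_append_replicate_succ] at hbtw
  simp only [step_near, step_target_self, step_target_not, target_node_append_replicate,
    depth_node, List.length_append, List.length_replicate] at hbtw hfresh
  rw [node_append_replicate_succ, ← hfresh]
  rcases hbtw with ⟨h, h'⟩ | ⟨h, h'⟩
  · exact iff_of_false h.not_gt (by exact_mod_cast (h.trans h').not_gt)
  · exact iff_of_true h' (by exact_mod_cast h.trans h')

theorem abs_split_sub_pin_lt (w : List Bool) (b : Bool) (k : ℕ) :
    |(node (w ++ List.replicate (k + 1) b)).split - pin w b| < (1 / 2 : ℝ) ^ k := by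
  have h := (valid_node (w ++ List.replicate (k + 1) b)).abs_split_sub_target_near
  rw [node_append_replicate_succ] at h ⊢
  simp only [step_near, step_target_self, step_depth, target_node_append_replicate,
    depth_node, List.length_append, List.length_replicate] at h
  exact h.trans_le (pow_le_pow_of_le_one (by norm_num) (by norm_num) (by omega))

theorem node_V_append_replicate_subset_sideOf (w : List Bool) (b : Bool) (k : ℕ) :
    (node (w ++ List.replicate (k + 1) b)).V ⊆
      sideOf (node (w ++ List.replicate k b)).split (pin w b) := by
  rw [node_append_replicate_succ, step_V, childV, target_node_append_replicate]
  exact inter_subset_right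

theorem node_V_append_replicate_subset_ball (w : List Bool) (b : Bool) (n : ℕ) :
    (node (w ++ List.replicate (n + 3) b)).V ⊆ Metric.ball (pin w b : ℝ) ((1 / 2) ^ n) := by
  set s₁ := (node (w ++ List.replicate (n + 1) b)).split
  set s₂ := (node (w ++ List.replicate (n + 2) b)).split
  have hbetween : s₁ < pin w b ∧ (pin w b : ℝ) < s₂ ∨ s₂ < pin w b ∧ (pin w b : ℝ) < s₁ := by
    have h₁ := split_lt_pin_iff w b n
    have h₂ := split_lt_pin_iff w b (n + 1)
    have hne₁ := (valid_node (w ++ List.replicate (n + 1) b)).split_ne (pin w b)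
    have hne₂ := (valid_node (w ++ List.replicate (n + 2) b)).split_ne (pin w b)
    rw [show w.length + (n + 1) + 1 = w.length + n + 1 + 1 by omega, Nat.even_add_one] at h₂
    by_cases he : Even (w.length + n + 1)
    · exact Or.inl ⟨h₁.2 he, (not_lt.1 (mt h₂.1 (not_not.2 he))).lt_of_ne hne₂⟩
    · exact Or.inr ⟨h₂.2 he, (not_lt.1 (mt h₁.1 he)).lt_of_ne hne₁⟩
  have hsub₁ : (node (w ++ List.replicate (n + 3) b)).V ⊆ sideOf s₁ (pin w b) := by
    rw [node_append_replicate_succ]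
    exact (childV_subset _ _).trans (node_V_append_replicate_subset_sideOf w b (n + 1))
  refine (subset_inter hsub₁ (node_V_append_replicate_subset_sideOf w b (n + 2))).trans
    (sideOf_inter_sideOf_subset_ball hbetween (abs_split_sub_pin_lt w b n) ?_)
  exact (abs_split_sub_pin_lt w b (n + 1)).trans_le
    (pow_le_pow_of_le_one (by norm_num) (by norm_num) n.le_succ)

section EventuallyConst

variable {y : ℕ → Bool} {N : ℕ} {b : Bool}

theorem node_prefixOf_succ (y : ℕ → Bool) (n : ℕ) :
    node (prefixOf y (n + 1)) = (node (prefixOf y n)).step (y n) := by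
  rw [prefixOf_succ, node_append_singleton]

theorem pin_mem_node_prefixOf (hy : ∀ k, N ≤ k → y k = b) (m : ℕ) :
    (pin (prefixOf y N) b : ℝ) ∈ (node (prefixOf y m)).V := by
  rcases le_total m N with hmN | hNm
  · exact node_V_antitone (prefixOf_isPrefix y hmN) (pin_mem_node _ b)
  · obtain ⟨k, rfl⟩ := Nat.exists_eq_add_of_le hNm
    rw [prefixOf_add_of_eventually_eq hy le_rfl]
    exact pin_mem_node_append_replicate _ b k

theorem exists_closure_node_prefixOf_subset (hy : ∀ k, N ≤ k → y k = b) {U : Set ℝ}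
    (hU : U ∈ 𝓝 (pin (prefixOf y N) b : ℝ)) : ∃ m, closure (node (prefixOf y m)).V ⊆ U := by
  obtain ⟨ε, hε, hball⟩ := Metric.mem_nhds_iff.1 hU
  obtain ⟨k, hk⟩ := exists_pow_lt_of_lt_one hε (by norm_num : (1 / 2 : ℝ) < 1)
  refine ⟨N + (k + 3), ?_⟩
  rw [prefixOf_add_of_eventually_eq hy le_rfl]
  calc closure (node (prefixOf y N ++ List.replicate (k + 3) b)).V
      ⊆ Metric.closedBall (pin (prefixOf y N) b : ℝ) ((1 / 2) ^ k) :=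
        closure_minimal ((node_V_append_replicate_subset_ball _ b k).trans
          Metric.ball_subset_closedBall) Metric.isClosed_closedBall
    _ ⊆ U := (Metric.closedBall_subset_ball hk).trans hball

theorem eq_pin_of_forall_mem_node_prefixOf (hy : ∀ k, N ≤ k → y k = b) {x : ℝ}
    (hx : ∀ m, x ∈ (node (prefixOf y m)).V) : x = pin (prefixOf y N) b := by
  by_contra hne
  obtain ⟨m, hm⟩ := exists_closure_node_prefixOf_subset hy (isOpen_ne.mem_nhds (Ne.symm hne))
  exact hm (subset_closure (hx m)) rfl

end EventuallyConst

/-- Past the stage `N` where the rational `q` of least code in the nodes has stabilised, `q` must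
become a target: on the fresh side it would be chosen as the fresh target, and it cannot stay off
the fresh side twice in a row. From then on the branch is forced to follow that target. -/
theorem eventually_const_of_forall_mem_node_prefixOf {y : ℕ → Bool} {r : ℚ}
    (hr : ∀ n, (r : ℝ) ∈ (node (prefixOf y n)).V) : ∃ N b, ∀ k, N ≤ k → y k = b := by
  have hanti : Antitone fun n => {x : ℚ | (x : ℝ) ∈ (node (prefixOf y n)).V} :=
    fun m n hmn _ hx => node_V_antitone (prefixOf_isPrefix y hmn) hx
  obtain ⟨N, q, hq⟩ := hanti.exists_eventually_isMinOn Encodable.encode_injective hr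
  have hq_step {n} (hn : N ≤ n) : (q : ℝ) ∈ (node (prefixOf y n)).childV (y n) := by
    simpa [node_prefixOf_succ] using (hq (n + 1) (by omega)).1
  obtain ⟨n, hn, b, hb⟩ : ∃ n, N ≤ n ∧ ∃ b, (node (prefixOf y n)).target b = q := by
    by_contra! hno
    have hside {n} (hn : N ≤ n) : ¬ (node (prefixOf y n)).OnFreshSide (y n) q := fun hside =>
      hno (n + 1) (by omega) (!y n) <| by
        rw [node_prefixOf_succ, step_target_not]
        exact (valid_node _).eq_fresh ⟨hq_step hn, hside⟩ fun x hx =>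
          (hq (n + 1) (by omega)).2 (by simpa [node_prefixOf_succ] using hx)
    have := (valid_node _).onFreshSide_step (hno N le_rfl (y N)).symm (hside le_rfl)
      (y (N + 1)) (by simpa [← node_prefixOf_succ] using (hno (N + 1) (by omega) _).symm)
    exact hside (by omega : N ≤ N + 1) (by simpa [← node_prefixOf_succ] using this)
  have hfollow {k} (hk : n ≤ k) (ht : (node (prefixOf y k)).target b = q) : y k = b :=
    (valid_node _).eq_of_target_mem_childV (ht ▸ hq_step (hn.trans hk))
  have htarget : ∀ k, n ≤ k → (node (prefixOf y k)).target b = q := by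
    intro k hk
    induction k, hk using Nat.le_induction with
    | base => exact hb
    | succ k hk ih => rw [node_prefixOf_succ, hfollow hk ih, step_target_self, ih]
  exact ⟨n, b, fun k hk => hfollow hk (htarget k hk)⟩

def addressWord (r : ℚ) : ℕ → List Bool
  | 0 => []
  | n + 1 => addressWord r n ++ [decide ((r : ℝ) ∈ (node (addressWord r n)).childV true)]

/-- The branch through `r`: a rational avoids the irrational cuts, so at each level it lies in
exactly one child. -/
def address (r : ℚ) (n : ℕ) : Bool := decide ((r : ℝ) ∈ (node (addressWord r n)).childV true)

theorem addressWord_eq_prefixOf (r : ℚ) (n : ℕ) :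
    addressWord r n = prefixOf (address r) n := by
  induction n with
  | zero => rfl
  | succ n ih => rw [prefixOf_succ, ← ih]; rfl

theorem mem_node_prefixOf_address (r : ℚ) (n : ℕ) :
    (r : ℝ) ∈ (node (prefixOf (address r) n)).V := by
  rw [← addressWord_eq_prefixOf]
  induction n with
  | zero => exact mem_univ _
  | succ n ih =>
    simp only [addressWord, node_append_singleton, step_V] at ih ⊢
    by_cases h : (r : ℝ) ∈ (node (addressWord r n)).childV true
    · simp [h]
    · obtain ⟨b, hb⟩ := (valid_node _).exists_mem_childV ih
      cases b
      · simpa [h] using hb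
      · exact absurd hb h

theorem eq_prefixOf_address_of_mem {r : ℚ} {w : List Bool} (h : (r : ℝ) ∈ (node w).V) :
    w = prefixOf (address r) w.length :=
  eq_of_mem_node_V (by simp) h (mem_node_prefixOf_address r _)

theorem address_eventually_const (r : ℚ) : ∃ N b, ∀ k, N ≤ k → address r k = b :=
  eventually_const_of_forall_mem_node_prefixOf (mem_node_prefixOf_address r)

theorem eq_pin_address {r : ℚ} {N : ℕ} {b : Bool} (h : ∀ k, N ≤ k → address r k = b) :
    r = pin (prefixOf (address r) N) b := by
  exact_mod_cast eq_pin_of_forall_mem_node_prefixOf h (mem_node_prefixOf_address r)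

theorem prefixOf_address_pin_isPrefix (w : List Bool) (b : Bool) (n : ℕ) :
    prefixOf (address (pin w b)) n <+: w ++ List.replicate n b := by
  have h := eq_prefixOf_address_of_mem (pin_mem_node_append_replicate w b n)
  rw [h]
  exact prefixOf_isPrefix _ (by simp)

def realBasis (e : ℕ → ℚ × ℚ) (n : ℕ) : Set ℝ := Ioo ((e n).1 : ℝ) (e n).2

theorem mem_ratBasis_iff {e : ℕ → ℚ × ℚ} {n : ℕ} {q : ℚ} :
    q ∈ ratBasis e n ↔ (q : ℝ) ∈ realBasis e n := by
  simp [ratBasis, realBasis]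

theorem exists_ratBasis_subset {e : ℕ → ℚ × ℚ} (he : Function.Surjective e) {U : Set ℝ}
    (hU : IsOpen U) {q : ℚ} (hq : (q : ℝ) ∈ U) :
    ∃ n, q ∈ ratBasis e n ∧ realBasis e n ⊆ U := by
  obtain ⟨u, v, hu, hv, hsub⟩ := hU.exists_rat_Ioo_subset hq
  obtain ⟨n, hn⟩ := he (u, v)
  refine ⟨n, mem_ratBasis_iff.2 ?_, ?_⟩ <;> rw [realBasis, hn]
  exacts [⟨hu, hv⟩, hsub]

def wordEnum (n : ℕ) : List Bool := (Encodable.decode n).getD []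

theorem wordEnum_surjective : Function.Surjective wordEnum :=
  Encodable.surjective_decode_getD _ []

def searchEnum {α : Type*} (g : ℕ → α) (c : α → ℕ) (P : ℕ → α → Prop) (i : ℕ) : ℕ :=
  if P i.unpair.1 (g i.unpair.2) then c (g i.unpair.2) + 1 else 0

theorem exists_searchEnum_eq_succ_iff {α : Type*} {g : ℕ → α} (hg : Function.Surjective g)
    (c : α → ℕ) (P : ℕ → α → Prop) {m : ℕ} :
    (∃ i, searchEnum g c P i = m + 1) ↔ ∃ k a, P k a ∧ c a = m := by
  constructor
  · rintro ⟨i, hi⟩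
    unfold searchEnum at hi
    split_ifs at hi with h
    exact ⟨_, _, h, by omega⟩
  · rintro ⟨k, a, h, rfl⟩
    obtain ⟨j, rfl⟩ := hg a
    exact ⟨Nat.pair k j, by simp [searchEnum, h]⟩

theorem enumerates_searchEnum (P : ℕ → ℕ → Prop) :
    Enumerates (searchEnum id id P) {n | ∃ k, P k n} := by
  ext n
  simp [exists_searchEnum_eq_succ_iff Function.surjective_id]

theorem enumeratesTree_searchEnum {code : List Bool → ℕ} (hcode : Function.Injective code)
    (P : ℕ → List Bool → Prop) :
    EnumeratesTree code (searchEnum wordEnum code P) {w | ∃ k, P k w} := by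
  ext w
  simp [exists_searchEnum_eq_succ_iff wordEnum_surjective, hcode.eq_iff]

theorem continuous_searchEnum {α X : Type*} [TopologicalSpace X] (g : ℕ → α) (c : α → ℕ)
    {P : X → ℕ → α → Prop} (hP : ∀ k a, IsClopen {x | P x k a}) :
    Continuous fun x => searchEnum g c (P x) :=
  continuous_pi fun i => Continuous.if (by simp [isClopen_iff_frontier_eq_empty.1 (hP _ _)])
    continuous_const continuous_const

section PathRats

def pathRats (T : Set (List Bool)) : Set ℚ := {r | ∀ n, prefixOf (address r) n ∈ T}

variable {T : Set (List Bool)}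

theorem isClosed_pathRats (T : Set (List Bool)) : IsClosed (pathRats T) := by
  refine isOpen_compl_iff.1 (isOpen_iff_forall_mem_open.2 fun r hr => ?_)
  obtain ⟨n, hn⟩ : ∃ n, prefixOf (address r) n ∉ T := by simpa [pathRats] using hr
  refine ⟨{x : ℚ | (x : ℝ) ∈ (node (prefixOf (address r) n)).V}, fun x hx hxT => ?_,
    (valid_node _).isOpen.preimage Rat.continuous_coe_real, mem_node_prefixOf_address r n⟩
  have h := eq_prefixOf_address_of_mem hx
  rw [length_prefixOf] at h
  exact hn (h ▸ hxT n)

theorem pin_mem_pathRats (hpre : ∀ w ∈ T, ∀ u, u <+: w → u ∈ T) {u : List Bool} {b : Bool}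
    (hchain : ∀ n, u ++ List.replicate n b ∈ T) : pin u b ∈ pathRats T :=
  fun n => hpre _ (hchain n) _ (prefixOf_address_pin_isPrefix u b n)

theorem pathRats_nonempty (hT : ECPTree T) : (pathRats T).Nonempty := by
  obtain ⟨⟨w, hw⟩, hpre, hext⟩ := hT
  obtain ⟨u, -, -, b, hchain⟩ := hext [] (hpre w hw [] List.nil_prefix)
  exact ⟨_, pin_mem_pathRats hpre hchain⟩

theorem ratBasis_inter_pathRats_nonempty_iff (hT : ECPTree T) {e : ℕ → ℚ × ℚ} {n : ℕ} :
    (ratBasis e n ∩ pathRats T).Nonempty ↔ ∃ w ∈ T, closure (node w).V ⊆ realBasis e n := by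
  constructor
  · rintro ⟨r, hrB, hrT⟩
    obtain ⟨N, b, hb⟩ := address_eventually_const r
    obtain ⟨m, hm⟩ := exists_closure_node_prefixOf_subset hb <|
      (eq_pin_address hb ▸ isOpen_Ioo.mem_nhds (mem_ratBasis_iff.1 hrB))
    exact ⟨_, hrT m, hm⟩
  · rintro ⟨w, hw, hcl⟩
    obtain ⟨u, -, hwu, b, hchain⟩ := hT.2.2 w hw
    have hpin : (pin u b : ℝ) ∈ (node w).V := node_V_antitone hwu (pin_mem_node u b)
    exact ⟨pin u b, mem_ratBasis_iff.2 (hcl (subset_closure hpin)),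
      pin_mem_pathRats hT.2.1 hchain⟩

end PathRats

variable {e : ℕ → ℚ × ℚ}

def closedNameOfTree (code : List Bool → ℕ) (e : ℕ → ℚ × ℚ) (p : ℕ → ℕ) : ℕ → ℕ :=
  searchEnum id id fun k n => ∃ w, p k = code w + 1 ∧ closure (node w).V ⊆ realBasis e n

theorem continuous_closedNameOfTree (code : List Bool → ℕ) (e : ℕ → ℚ × ℚ) :
    Continuous (closedNameOfTree code e) :=
  continuous_searchEnum _ _ fun k n => (isClopen_discrete
    {m | ∃ w, m = code w + 1 ∧ closure (node w).V ⊆ realBasis e n}).preimage (continuous_apply k)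

theorem closedName_closedNameOfTree {code : List Bool → ℕ} {p : ℕ → ℕ}
    (hT : ECPTree {w | ∃ k, p k = code w + 1}) :
    ClosedName (ratBasis e) (pathRats {w | ∃ k, p k = code w + 1}) (closedNameOfTree code e p) := by
  rw [ClosedName, Enumerates, closedNameOfTree, ← enumerates_searchEnum]
  ext n
  simp only [mem_ofPred_eq, ratBasis_inter_pathRats_nonempty_iff hT]
  exact ⟨fun ⟨w, ⟨k, hk⟩, h⟩ => ⟨k, w, hk, h⟩, fun ⟨k, w, hk, h⟩ => ⟨w, ⟨k, hk⟩, h⟩⟩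

/-- `t` encodes a word `w = wordEnum t.1` of length `i + 1` and an index `t.2` at which `q`
lists a basic interval contained in the node of `w`. -/
def PrefixWitness (e : ℕ → ℚ × ℚ) (q : ℕ → ℕ) (i t : ℕ) : Prop :=
  (wordEnum t.unpair.1).length = i + 1 ∧
    ∃ n, q t.unpair.2 = n + 1 ∧ realBasis e n ⊆ (node (wordEnum t.unpair.1)).V

def addressOfName (e : ℕ → ℚ × ℚ) (q : ℕ → ℕ) (i : ℕ) : Bool :=
  (wordEnum (if h : ∃ t, PrefixWitness e q i t then Nat.find h else 0).unpair.1).getLastD false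

theorem continuousOn_addressOfName (e : ℕ → ℚ × ℚ) :
    ContinuousOn (addressOfName e) {q | ∀ i, ∃ t, PrefixWitness e q i t} := by
  refine continuousOn_pi.2 fun i => ?_
  have hfind := continuousOn_nat_find (P := fun q t => PrefixWitness e q i t) fun t =>
    (isClopen_discrete {m | (wordEnum t.unpair.1).length = i + 1 ∧
      ∃ n, m = n + 1 ∧ realBasis e n ⊆ (node (wordEnum t.unpair.1)).V}).preimage
      (continuous_apply t.unpair.2)
  have hlast : Continuous fun t : ℕ => (wordEnum t.unpair.1).getLastD false :=
    continuous_of_discreteTopology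
  exact (hlast.comp_continuousOn hfind).mono fun q hq => hq i

theorem exists_prefixWitness (he : Function.Surjective e) {x : ℚ} {q : ℕ → ℕ}
    (hq : PointName (ratBasis e) x q) (i : ℕ) : ∃ t, PrefixWitness e q i t := by
  obtain ⟨n, hxn, hsub⟩ := exists_ratBasis_subset he (valid_node _).isOpen
    (mem_node_prefixOf_address x (i + 1))
  obtain ⟨k, hk⟩ := (Enumerates.mem_iff hq).1 hxn
  obtain ⟨j, hj⟩ := wordEnum_surjective (prefixOf (address x) (i + 1))
  exact ⟨Nat.pair j k, by simp [PrefixWitness, hj, hk, hsub]⟩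

theorem addressOfName_eq (he : Function.Surjective e) {x : ℚ} {q : ℕ → ℕ}
    (hq : PointName (ratBasis e) x q) : addressOfName e q = address x := by
  funext i
  have h := exists_prefixWitness he hq i
  obtain ⟨hlen, n, hn, hsub⟩ := Nat.find_spec h
  have hxn : x ∈ ratBasis e n := (Enumerates.mem_iff hq).2 ⟨_, hn⟩
  have hw := eq_prefixOf_address_of_mem (hsub (mem_ratBasis_iff.1 hxn))
  rw [addressOfName, dif_pos h, hw, hlen, prefixOf_succ, List.getLastD_concat]

def treeOfClosed (A : Set ℚ) : Set (List Bool) := {w | ∃ a ∈ A, (a : ℝ) ∈ (node w).V}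

theorem ecpTree_treeOfClosed {A : Set ℚ} (hA : A.Nonempty) : ECPTree (treeOfClosed A) := by
  obtain ⟨a₀, ha₀⟩ := hA
  refine ⟨⟨[], a₀, ha₀, mem_univ _⟩,
    fun w ⟨a, ha, haw⟩ u hu => ⟨a, ha, node_V_antitone hu haw⟩, fun w ⟨a, ha, haw⟩ => ?_⟩
  obtain ⟨N, b, hb⟩ := address_eventually_const a
  refine ⟨prefixOf (address a) (max N w.length), ⟨a, ha, mem_node_prefixOf_address a _⟩, ?_,
    b, fun n => ⟨a, ha, ?_⟩⟩
  · conv_lhs => rw [eq_prefixOf_address_of_mem haw]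
    exact prefixOf_isPrefix _ (le_max_right _ _)
  · rw [← prefixOf_add_of_eventually_eq hb (le_max_left _ _)]
    exact mem_node_prefixOf_address a _

def treeOfName (code : List Bool → ℕ) (e : ℕ → ℚ × ℚ) (p : ℕ → ℕ) : ℕ → ℕ :=
  searchEnum wordEnum code fun k w => ∃ n, p k = n + 1 ∧ realBasis e n ⊆ (node w).V

theorem continuous_treeOfName (code : List Bool → ℕ) (e : ℕ → ℚ × ℚ) :
    Continuous (treeOfName code e) :=
  continuous_searchEnum _ _ fun k w => (isClopen_discrete
    {m | ∃ n, m = n + 1 ∧ realBasis e n ⊆ (node w).V}).preimage (continuous_apply k)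

theorem treeOfClosed_eq {code : List Bool → ℕ} (hcode : Function.Injective code)
    (he : Function.Surjective e) {A : Set ℚ} {p : ℕ → ℕ} (hp : ClosedName (ratBasis e) A p) :
    treeOfClosed A = {w | ∃ k, treeOfName code e p k = code w + 1} := by
  rw [treeOfName, ← enumeratesTree_searchEnum hcode]
  ext w
  constructor
  · rintro ⟨a, ha, haw⟩
    obtain ⟨n, han, hsub⟩ := exists_ratBasis_subset he (valid_node w).isOpen haw
    obtain ⟨k, hk⟩ := (Enumerates.mem_iff hp).1 ⟨a, han, ha⟩
    exact ⟨k, n, hk, hsub⟩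
  · rintro ⟨k, n, hk, hsub⟩
    obtain ⟨a, han, ha⟩ := (Enumerates.mem_iff hp).2 ⟨k, hk⟩
    exact ⟨a, ha, hsub (mem_ratBasis_iff.1 han)⟩

def pointNameOfPath (e : ℕ → ℚ × ℚ) (x : ℕ → Bool) : ℕ → ℕ :=
  searchEnum id id fun m n => closure (node (prefixOf x m)).V ⊆ realBasis e n

theorem continuous_prefixOf (m : ℕ) : Continuous fun x : ℕ → Bool => prefixOf x m :=
  continuous_of_discreteTopology (f := fun v : Fin m → Bool => List.ofFn v).comp
    (continuous_pi fun i => continuous_apply (i : ℕ))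

theorem continuous_pointNameOfPath (e : ℕ → ℚ × ℚ) : Continuous (pointNameOfPath e) :=
  continuous_searchEnum _ _ fun m n =>
    (isClopen_discrete {w | closure (node w).V ⊆ realBasis e n}).preimage
      (continuous_prefixOf m)

section Path

variable {x : ℕ → Bool} {N : ℕ} {b : Bool}

theorem pin_mem_of_forall_prefixOf_mem {A : Set ℚ} (hA : IsClosed A)
    (hx : ∀ n, prefixOf x n ∈ treeOfClosed A) (hb : ∀ k, N ≤ k → x k = b) :
    pin (prefixOf x N) b ∈ A := by
  refine hA.closure_subset_iff.2 subset_rfl (Metric.mem_closure_iff.2 fun ε hε => ?_)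
  obtain ⟨m, hm⟩ := exists_closure_node_prefixOf_subset hb (Metric.ball_mem_nhds _ hε)
  obtain ⟨a, ha, ham⟩ := hx m
  refine ⟨a, ha, ?_⟩
  have := hm (subset_closure ham)
  rw [Metric.mem_ball, dist_comm] at this
  exact_mod_cast this

theorem pointName_pointNameOfPath (hb : ∀ k, N ≤ k → x k = b) :
    PointName (ratBasis e) (pin (prefixOf x N) b) (pointNameOfPath e x) := by
  rw [PointName, Enumerates, pointNameOfPath, ← enumerates_searchEnum]
  ext n
  simp only [mem_ofPred_eq, mem_ratBasis_iff]
  constructor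
  · exact fun h => exists_closure_node_prefixOf_subset hb (isOpen_Ioo.mem_nhds h)
  · exact fun ⟨m, hm⟩ => hm (subset_closure (pin_mem_node_prefixOf hb m))

end Path

end ECP

end

open ECP in
/-- ECP is topologically Weihrauch equivalent to overt choice for ℚ. -/
theorem ECP_equiv_overt_choice_rat (code : List Bool → ℕ) (hcode : Function.Injective code)
    (e : ℕ → ℚ × ℚ) (he : Function.Surjective e) :
    -- (1) ECP is reducible to overt choice for ℚ
    (∃ (K : (ℕ → ℕ) → (ℕ → ℕ)) (Aset : (ℕ → ℕ) → Set ℚ)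
        (H : (ℕ → ℕ) × (ℕ → ℕ) → (ℕ → Bool)),
      ContinuousOn K {p | ∃ T, ECPTree T ∧ EnumeratesTree code p T} ∧
      (∀ (p : ℕ → ℕ) (T : Set (List Bool)), ECPTree T → EnumeratesTree code p T →
        (Aset p).Nonempty ∧ IsClosed (Aset p) ∧ ClosedName (ratBasis e) (Aset p) (K p)) ∧
      ContinuousOn H {pq : (ℕ → ℕ) × (ℕ → ℕ) |
        (∃ T, ECPTree T ∧ EnumeratesTree code pq.1 T) ∧
        ∃ x ∈ Aset pq.1, PointName (ratBasis e) x pq.2} ∧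
      (∀ (p : ℕ → ℕ) (T : Set (List Bool)), ECPTree T → EnumeratesTree code p T →
        ∀ (q : ℕ → ℕ) (x : ℚ), x ∈ Aset p → PointName (ratBasis e) x q →
          ECPath T (H (p, q)))) ∧
    -- (2) overt choice for ℚ is reducible to ECP
    (∃ (K' : (ℕ → ℕ) → (ℕ → ℕ)) (Tset : (ℕ → ℕ) → Set (List Bool))
        (H' : (ℕ → ℕ) × (ℕ → Bool) → (ℕ → ℕ)),
      ContinuousOn K' {p | ∃ A : Set ℚ, A.Nonempty ∧ IsClosed A ∧
        ClosedName (ratBasis e) A p} ∧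
      (∀ (p : ℕ → ℕ) (A : Set ℚ), A.Nonempty → IsClosed A → ClosedName (ratBasis e) A p →
        ECPTree (Tset p) ∧ EnumeratesTree code (K' p) (Tset p)) ∧
      ContinuousOn H' {px : (ℕ → ℕ) × (ℕ → Bool) |
        (∃ A : Set ℚ, A.Nonempty ∧ IsClosed A ∧ ClosedName (ratBasis e) A px.1) ∧
        ECPath (Tset px.1) px.2} ∧
      (∀ (p : ℕ → ℕ) (A : Set ℚ), A.Nonempty → IsClosed A → ClosedName (ratBasis e) A p →
        ∀ x : ℕ → Bool, ECPath (Tset p) x →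
          ∃ q ∈ A, PointName (ratBasis e) q (H' (p, x)))) := by
  refine ⟨⟨closedNameOfTree code e, fun p => pathRats {w | ∃ k, p k = code w + 1},
    fun pq => addressOfName e pq.2, (continuous_closedNameOfTree code e).continuousOn, ?_, ?_, ?_⟩,
    ⟨treeOfName code e, fun p => {w | ∃ k, treeOfName code e p k = code w + 1},
    fun px => pointNameOfPath e px.2, (continuous_treeOfName code e).continuousOn, ?_,
    (continuous_pointNameOfPath e).comp continuous_snd |>.continuousOn, ?_⟩⟩
  · rintro p T hT rfl
    exact ⟨pathRats_nonempty hT, isClosed_pathRats _, closedName_closedNameOfTree hT⟩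
  · exact (continuousOn_addressOfName e).comp continuous_snd.continuousOn
      fun pq ⟨_, x, _, hq⟩ => exists_prefixWitness he hq
  · rintro p T - rfl q x hx hq
    dsimp only
    rw [addressOfName_eq he hq]
    exact ⟨hx, address_eventually_const x⟩
  · intro p A hA _ hp
    exact ⟨(treeOfClosed_eq hcode he hp).subst (ecpTree_treeOfClosed hA), rfl⟩
  · rintro p A - hAc hp x ⟨hx, N, b, hb⟩
    dsimp only at hx ⊢
    rw [← treeOfClosed_eq hcode he hp] at hx
    exact ⟨_, pin_mem_of_forall_prefixOf_mem hAc hx hb, pointName_pointNameOfPath hb⟩
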